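/- For every nonzero e ∈ ℂ there is an isomorphism of local ℂ-algebras ℂ[[t,u,v]]/(uv, tv, tu − e·v) ≅ ℂ[[x,y,z]]/(2x+yz, xz, xy). The right-hand side is the Milnor algebra Q(x²+xyz) of the non-isolated singularity x² + xyz; the left-hand side is the local ring of the modular stratum of the symmetric exceptional singularities T_{6,4,2} and T_{6,6,2}. -/

import Mathlib

/-!
The coordinate change `t ↦ y, u ↦ z, v ↦ -(2/e)·x` is an automorphism of `ℂ[[x,y,z]]`; it sends
`uv` and `tv` to unit multiples of `xz` and `xy`, and `tu - e·v` to `yz + 2x`.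
-/

open MvPowerSeries

namespace MvPowerSeries

theorem rescale_X {σ S : Type*} [CommSemiring S] (a : σ → S) (s : σ) :
    rescale a (X s) = C (a s) * X s := by
  classical
  ext n
  rw [coeff_rescale, coeff_C_mul, coeff_X]
  split_ifs with h
  · simp [h]
  · simp

variable {σ R : Type*} [CommRing R]

noncomputable def rescaleEquiv (a : σ → Rˣ) : MvPowerSeries σ R ≃ₐ[R] MvPowerSeries σ R :=
  AlgEquiv.ofAlgHom (rescaleAlgHom fun s ↦ (a s : R)) (rescaleAlgHom fun s ↦ ((a s)⁻¹ : Rˣ))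
    (by rw [← rescaleAlgHom_mul, ← rescaleAlgHom_one]; congr; funext s; simp)
    (by rw [← rescaleAlgHom_mul, ← rescaleAlgHom_one]; congr; funext s; simp)

@[simp]
theorem rescaleEquiv_X (a : σ → Rˣ) (s : σ) : rescaleEquiv a (X s) = C (a s : R) * X s := by
  simp [rescaleEquiv, rescaleAlgHom_apply, rescale_X]

noncomputable def cyclicRescale (c : Rˣ) : MvPowerSeries (Fin 3) R ≃ₐ[R] MvPowerSeries (Fin 3) R :=
  (renameEquiv R (finRotate 3)).trans (rescaleEquiv ![c, 1, 1])

variable (c : Rˣ)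

@[simp]
theorem cyclicRescale_X_zero : cyclicRescale c (X 0) = X 1 := by
  simp [cyclicRescale]

@[simp]
theorem cyclicRescale_X_one : cyclicRescale c (X 1) = X 2 := by
  simp [cyclicRescale]

@[simp]
theorem cyclicRescale_X_two : cyclicRescale c (X 2) = C (c : R) * X 0 := by
  simp [cyclicRescale]

end MvPowerSeries

theorem Ideal.span_insert_unit_mul {R : Type*} [CommSemiring R] {u : R} (hu : IsUnit u) (a : R)
    (s : Set R) : Ideal.span (insert (u * a) s) = Ideal.span (insert a s) := by
  rw [Ideal.span_insert, Ideal.span_insert, Ideal.span_singleton_mul_left_unit hu]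

theorem MvPowerSeries.map_cyclicRescale_span {R : Type*} [CommRing R] {e : R} {c : Rˣ}
    (hec : e * c = -2) :
    Ideal.map (cyclicRescale c)
        (Ideal.span {X 1 * X 2, X 0 * X 2, X 0 * X 1 - (C e : MvPowerSeries (Fin 3) R) * X 2}) =
      Ideal.span {2 * X 0 + X 1 * X 2, X 0 * X 2, X 0 * X 1} := by
  have hCc : IsUnit (C (c : R) : MvPowerSeries (Fin 3) R) := c.isUnit.map C
  have hCec : C e * C (c : R) = (-2 : MvPowerSeries (Fin 3) R) := by
    rw [← map_mul, hec, map_neg, map_ofNat]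
  have huv : cyclicRescale c (X 1 * X 2) = C (c : R) * (X 0 * X 2) := by
    rw [map_mul, cyclicRescale_X_one, cyclicRescale_X_two]; ring
  have htv : cyclicRescale c (X 0 * X 2) = C (c : R) * (X 0 * X 1) := by
    rw [map_mul, cyclicRescale_X_zero, cyclicRescale_X_two]; ring
  have htu : cyclicRescale c (X 0 * X 1 - C e * X 2) = 2 * X 0 + X 1 * X 2 := by
    have hCe : cyclicRescale c (C e) = C e := (cyclicRescale c).commutes e
    rw [map_sub, map_mul, map_mul, cyclicRescale_X_zero, cyclicRescale_X_one,
      cyclicRescale_X_two, hCe]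
    linear_combination (-X 0) * hCec
  rw [Ideal.map_span, Set.image_insert_eq, Set.image_insert_eq, Set.image_singleton]
  simp only [huv, htv, htu]
  rw [Ideal.span_insert_unit_mul hCc, Set.insert_comm, Ideal.span_insert_unit_mul hCc]
  congr 1
  ext
  simp only [Set.mem_insert_iff, Set.mem_singleton_iff]
  tauto

/-- For every nonzero `e ∈ ℂ` the local `ℂ`-algebras `ℂ[[t,u,v]]/(uv, tv, tu - e·v)`
(the local ring of the modular stratum of the symmetric exceptional singularities
`T_{6,4,2}` and `T_{6,6,2}`) and `ℂ[[x,y,z]]/(2x+yz, xz, xy)` (the Milnor algebra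
`Q(x²+xyz)` of the non-isolated singularity `x²+xyz`) are isomorphic. -/
theorem modularAlgebraT642_iso_milnorAlgebra_x2xyz (e : ℂ) (he : e ≠ 0) :
    Nonempty ((MvPowerSeries (Fin 3) ℂ ⧸
        Ideal.span {X 1 * X 2, X 0 * X 2, X 0 * X 1 - (C e : MvPowerSeries (Fin 3) ℂ) * X 2}) ≃ₐ[ℂ]
      (MvPowerSeries (Fin 3) ℂ ⧸
        Ideal.span {(2 : MvPowerSeries (Fin 3) ℂ) * X 0 + X 1 * X 2,
          X 0 * X 2, X 0 * X 1})) := by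
  let c : ℂˣ := Units.mk0 (-2 / e) (div_ne_zero (by norm_num) he)
  have hec : e * c = -2 := mul_div_cancel₀ _ he
  exact ⟨Ideal.quotientEquivAlg _ _ (cyclicRescale c) (map_cyclicRescale_span hec).symm⟩
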